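/- Let H ≤ GL(d,ℝ) be integrably admissible with essential frequency support 𝒪, and let 𝒬 = (h_i^{-T} Q)_{i ∈ I} be a covering of 𝒪 induced by H (i.e., (h_i)_{i ∈ I} is well-spread in H and Q is relatively compact with Q̄ ⊆ 𝒪). Then 𝒬 is an admissible covering of 𝒪: each Q_i is nonempty, ⋃_i Q_i = 𝒪, and sup_{i ∈ I} #{ℓ ∈ I : Q_ℓ ∩ Q_i ≠ ∅} < ∞. -/

import Mathlib

open MeasureTheory Matrix Topology
open scoped Pointwise ENNReal

/-- The dual action of `h ∈ GL(d,ℝ)` on `ξ ∈ ℝ^d`, given by `ξ ↦ hᵀ ξ`. -/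
noncomputable def dualAct {d : ℕ} (h : GL (Fin d) ℝ) (ξ : Fin d → ℝ) : Fin d → ℝ :=
  ((h : Matrix (Fin d) (Fin d) ℝ)ᵀ).mulVec ξ

/-- `((Y,Z)) = {h ∈ H : hᵀ Y ∩ Z ≠ ∅}`. -/
def pairSet {d : ℕ} (H : Subgroup (GL (Fin d) ℝ)) (Y Z : Set (Fin d → ℝ)) :
    Set (GL (Fin d) ℝ) :=
  {h | h ∈ H ∧ ∃ ξ ∈ Y, dualAct h ξ ∈ Z}

/-- `H ≤ GL(d,ℝ)` is integrably admissible with essential frequency support `O`: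
`H` is closed, `O` is open, co-null and `Hᵀ`-invariant, the dual action of `H` on `O`
is proper, and `O = Hᵀ C` for some compact `C ⊆ O`. -/
def IsIntegrablyAdmissible {d : ℕ} (H : Subgroup (GL (Fin d) ℝ))
    (O : Set (Fin d → ℝ)) : Prop :=
  IsClosed (H : Set (GL (Fin d) ℝ)) ∧ IsOpen O ∧ MeasureTheory.volume Oᶜ = 0 ∧
  (∀ h ∈ H, ∀ ξ ∈ O, dualAct h ξ ∈ O) ∧
  (∀ K : Set (Fin d → ℝ), K ⊆ O → IsCompact K →
    IsCompact {p : GL (Fin d) ℝ × (Fin d → ℝ) |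
      p.1 ∈ H ∧ p.2 ∈ O ∧ p.2 ∈ K ∧ dualAct p.1 p.2 ∈ K}) ∧
  ∃ C : Set (Fin d → ℝ), C ⊆ O ∧ IsCompact C ∧ O = ⋃ h ∈ H, dualAct h '' C


private lemma dualAct_mul' {d : ℕ} (g k : GL (Fin d) ℝ) (ξ : Fin d → ℝ) :
    dualAct (g * k) ξ = dualAct k (dualAct g ξ) := by
  simp [dualAct, Units.val_mul, Matrix.transpose_mul, Matrix.mulVec_mulVec]

private lemma dualAct_one' {d : ℕ} (ξ : Fin d → ℝ) : dualAct (1 : GL (Fin d) ℝ) ξ = ξ := by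
  simp [dualAct]

private lemma dualAct_inv_right' {d : ℕ} (g : GL (Fin d) ℝ) (ξ : Fin d → ℝ) :
    dualAct g (dualAct g⁻¹ ξ) = ξ := by
  rw [← dualAct_mul', inv_mul_cancel, dualAct_one']

theorem stmt5 {d : ℕ} (H : Subgroup (GL (Fin d) ℝ)) (O : Set (Fin d → ℝ))
    (hadm : IsIntegrablyAdmissible H O)
    {I : Type*} (h : I → GL (Fin d) ℝ) (hhH : ∀ i, h i ∈ H)
    -- well-spread: U-dense and V-separated
    (U : Set (GL (Fin d) ℝ)) (hUc : IsCompact (closure U))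
    (hUcover : (H : Set (GL (Fin d) ℝ)) = ⋃ i, (h i * ·) '' U)
    (V : Set (GL (Fin d) ℝ)) (hV : V ∈ 𝓝 (1 : GL (Fin d) ℝ))
    (hsep : Pairwise fun i j => Disjoint ((h i * ·) '' V) ((h j * ·) '' V))
    -- induced covering
    (Q : Set (Fin d → ℝ)) (hQc : IsCompact (closure Q)) (hQO : closure Q ⊆ O)
    (hcov : O = ⋃ i, dualAct (h i)⁻¹ '' Q) :
    (∀ i, (dualAct (h i)⁻¹ '' Q).Nonempty) ∧
    (⋃ i, dualAct (h i)⁻¹ '' Q) = O ∧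
    ∃ N : ℕ, ∀ i : I,
      {j : I | (dualAct (h j)⁻¹ '' Q ∩ dualAct (h i)⁻¹ '' Q).Nonempty}.Finite ∧
      Nat.card {j : I | (dualAct (h j)⁻¹ '' Q ∩ dualAct (h i)⁻¹ '' Q).Nonempty} ≤ N := by
  obtain ⟨-, -, hOnull, -, hproper, -⟩ := hadm
  have hQne : Q.Nonempty := by
    have hOne : O.Nonempty := by
      rw [Set.nonempty_iff_ne_empty]
      intro h0
      rw [h0, Set.compl_empty] at hOnull
      exact isOpen_univ.measure_ne_zero volume ⟨(0 : Fin d → ℝ), trivial⟩ hOnull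
    obtain ⟨ξ, hξ⟩ := hOne
    rw [hcov] at hξ
    simp only [Set.mem_iUnion, Set.mem_image] at hξ
    obtain ⟨i0, q, hq, -⟩ := hξ
    exact ⟨q, hq⟩
  refine ⟨fun i => ⟨dualAct (h i)⁻¹ hQne.choose, Set.mem_image_of_mem _ hQne.choose_spec⟩,
    hcov.symm, ?_⟩
  have hK := hproper (closure Q) hQO hQc
  set P := {p : GL (Fin d) ℝ × (Fin d → ℝ) |
      p.1 ∈ H ∧ p.2 ∈ O ∧ p.2 ∈ closure Q ∧ dualAct p.1 p.2 ∈ closure Q} with hP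
  set L := Prod.fst '' P with hLdef
  have hLc : IsCompact L := hK.image continuous_fst
  have hLinv : IsCompact (L⁻¹) := hLc.inv
  set W := interior V with hWdef
  have hWnhds : W ∈ 𝓝 (1 : GL (Fin d) ℝ) := interior_mem_nhds.mpr hV
  have h1inv : (1 : GL (Fin d) ℝ) ∈ W⁻¹ := by
    rw [Set.mem_inv, inv_one]; exact mem_of_mem_nhds hWnhds
  have hWWnhds : W * W⁻¹ ∈ 𝓝 (1 : GL (Fin d) ℝ) :=
    Filter.mem_of_superset hWnhds (fun w hw => by simpa using Set.mul_mem_mul hw h1inv)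
  obtain ⟨V₁, hV₁, hsplit⟩ := exists_nhds_split_inv hWWnhds
  have hV₁inv : V₁⁻¹ ∈ 𝓝 (1 : GL (Fin d) ℝ) := by
    have hc : ContinuousAt (fun x : GL (Fin d) ℝ => x⁻¹) 1 := continuous_inv.continuousAt
    have h2 := hc.preimage_mem_nhds (by simpa using hV₁)
    exact h2
  set W₀ := V₁ ∩ V₁⁻¹ with hW₀def
  have hW₀nhds : W₀ ∈ 𝓝 (1 : GL (Fin d) ℝ) := Filter.inter_mem hV₁ hV₁inv
  have hW₀key : ∀ a ∈ W₀, ∀ b ∈ W₀, a⁻¹ * b ∈ W * W⁻¹ := by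
    intro a ha b hb
    have ha' : a⁻¹ ∈ V₁ := Set.mem_inv.mp ha.2
    have hb' : b⁻¹ ∈ V₁ := Set.mem_inv.mp hb.2
    simpa [div_eq_mul_inv] using hsplit a⁻¹ ha' b⁻¹ hb'
  obtain ⟨s, -, hs_cov⟩ := hLinv.elim_nhds_subcover (fun t => (t * ·) '' W₀) (fun t _ => by
    have h1 := (Homeomorph.mulLeft t).map_nhds_eq 1
    simp only [Homeomorph.coe_mulLeft, mul_one] at h1
    rw [← h1]
    exact Filter.image_mem_map hW₀nhds)
  refine ⟨s.card, fun i => ?_⟩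
  have hmem : ∀ j, (dualAct (h j)⁻¹ '' Q ∩ dualAct (h i)⁻¹ '' Q).Nonempty →
      (h i)⁻¹ * h j ∈ (L⁻¹ : Set (GL (Fin d) ℝ)) := by
    rintro j ⟨x, ⟨ξ, hξQ, hx1⟩, ⟨η, hηQ, hx2⟩⟩
    have hback : dualAct ((h j)⁻¹ * h i) ξ = η := by
      rw [dualAct_mul', hx1, ← hx2, dualAct_inv_right']
    have hmemP : (((h j)⁻¹ * h i, ξ) : GL (Fin d) ℝ × (Fin d → ℝ)) ∈ P :=
      ⟨mul_mem (inv_mem (hhH j)) (hhH i), hQO (subset_closure hξQ), subset_closure hξQ,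
        by rw [hback]; exact subset_closure hηQ⟩
    rw [Set.mem_inv, _root_.mul_inv_rev, inv_inv]
    exact ⟨_, hmemP, rfl⟩
  have hdisj : ∀ j k : I, j ≠ k →
      Disjoint (((h i)⁻¹ * h j * ·) '' W) (((h i)⁻¹ * h k * ·) '' W) := by
    intro j k hjk
    have h1 : Disjoint ((h j * ·) '' W) ((h k * ·) '' W) :=
      (hsep hjk).mono (Set.image_mono interior_subset) (Set.image_mono interior_subset)
    have h2 := h1.image (f := ((h i)⁻¹ * ·)) (u := Set.univ)
      (mul_right_injective ((h i)⁻¹)).injOn (Set.subset_univ _) (Set.subset_univ _)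
    simpa only [Set.image_image, mul_assoc] using h2
  have huniq : ∀ (t : GL (Fin d) ℝ) (j k : I),
      (h i)⁻¹ * h j ∈ (t * ·) '' W₀ → (h i)⁻¹ * h k ∈ (t * ·) '' W₀ → j = k := by
    rintro t j k ⟨a, ha, hta⟩ ⟨b, hb, htb⟩
    by_contra hjk
    have hab : a⁻¹ * b ∈ W * W⁻¹ := hW₀key a ha b hb
    rw [Set.mem_mul] at hab
    obtain ⟨w1, hw1, w2, hw2, hww⟩ := hab
    have key : (h i)⁻¹ * h j * w1 = (h i)⁻¹ * h k * w2⁻¹ := by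
      rw [← hta, ← htb]
      have hb2 : b = a * (w1 * w2) := by rw [hww]; exact (mul_inv_cancel_left a b).symm
      rw [hb2]; group
    exact (hdisj j k hjk).ne_of_mem ⟨w1, hw1, rfl⟩ ⟨w2⁻¹, Set.mem_inv.mp hw2, rfl⟩ key
  set Ji := {j : I | (dualAct (h j)⁻¹ '' Q ∩ dualAct (h i)⁻¹ '' Q).Nonempty} with hJidef
  have hchoice : ∀ j : Ji, ∃ t ∈ s, (h i)⁻¹ * h j.1 ∈ (t * ·) '' W₀ := by
    intro j
    have := hs_cov (hmem j.1 j.2)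
    simpa using this
  choose t ht1 ht2 using hchoice
  have hinj : Function.Injective (fun j : Ji => (⟨t j, ht1 j⟩ : {x // x ∈ s})) := by
    intro j k hjk
    simp only [Subtype.mk.injEq] at hjk
    refine Subtype.ext (huniq (t j) j.1 k.1 (ht2 j) ?_)
    rw [hjk]; exact ht2 k
  have hfin : Ji.Finite := Set.finite_coe_iff.mp (Finite.of_injective _ hinj)
  refine ⟨hfin, ?_⟩
  calc Nat.card Ji ≤ Nat.card {x // x ∈ s} := Nat.card_le_card_of_injective _ hinj
    _ = s.card := Nat.card_eq_finsetCard s
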